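/- Let H be a bipartite graph of radius three, let u be a central vertex of H, and let δ′(H) = min over central vertices x of the minimum cardinality of a set A ⊆ N_H(x) that dominates the set of vertices at distance exactly 2 from x. Then dim_l(K_1 + H) ≤ δ′(H) + 1, with equality if and only if the vertex of K_1 belongs to some local metric basis for K_1 + H. -/

import Mathlib

open SimpleGraph

/-- A set `S` is a local metric generator for `G` if every pair of adjacent
vertices is distinguished (by distance) by some element of `S`. -/
def IsLocalMetricGenerator {α : Type*} (G : SimpleGraph α) (S : Set α) : Prop :=
  ∀ x y : α, G.Adj x y → ∃ v ∈ S, G.dist v x ≠ G.dist v y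

/-- The local metric dimension of a graph. -/
noncomputable def localMetricDim {α : Type*} (G : SimpleGraph α) : ℕ :=
  sInf {k | ∃ S : Finset α, S.card = k ∧ IsLocalMetricGenerator G ↑S}

/-- A local metric basis: a minimum-cardinality local metric generator. -/
def IsLocalMetricBasis {α : Type*} (G : SimpleGraph α) (S : Finset α) : Prop :=
  IsLocalMetricGenerator G ↑S ∧ S.card = localMetricDim G

/-- The corona product `G ⊙ H`. -/
def corona {α β : Type*} (G : SimpleGraph α) (H : SimpleGraph β) :
    SimpleGraph (α ⊕ α × β) :=
  SimpleGraph.fromRel (fun x y => match x, y with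
    | Sum.inl a, Sum.inl a' => G.Adj a a'
    | Sum.inl a, Sum.inr p => a = p.1
    | Sum.inr p, Sum.inl a => a = p.1
    | Sum.inr p, Sum.inr q => p.1 = q.1 ∧ H.Adj p.2 q.2)

/-- The join `K₁ + H`; the vertex of `K₁` is `none`. -/
def joinK1 {β : Type*} (H : SimpleGraph β) : SimpleGraph (Option β) :=
  SimpleGraph.fromRel (fun x y => match x, y with
    | none, some _ => True
    | some b, some b' => H.Adj b b'
    | _, _ => False)

/-- Eccentricity of a vertex (in `ℕ∞`). -/
noncomputable def ecc {α : Type*} (G : SimpleGraph α) (x : α) : ℕ∞ :=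
  ⨆ y, G.edist x y

/-- Radius of a graph (in `ℕ∞`). -/
noncomputable def gradius {α : Type*} (G : SimpleGraph α) : ℕ∞ :=
  ⨅ x, ecc G x

/-- Diameter of a graph (in `ℕ∞`). -/
noncomputable def gdiam {α : Type*} (G : SimpleGraph α) : ℕ∞ :=
  ⨆ x, ecc G x

/-- `δ'(H)`: minimum over central vertices `x` of the minimum size of a subset of `N(x)`
dominating the set of vertices at distance exactly 2 from `x`. -/
noncomputable def deltaPrime {β : Type*} (H : SimpleGraph β) : ℕ :=
  sInf {k | ∃ x : β, ecc H x = gradius H ∧ ∃ A : Finset β, A.card = k ∧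
    (∀ a ∈ A, H.Adj x a) ∧ ∀ w : β, H.edist x w = 2 → w ∉ A → ∃ a ∈ A, H.Adj a w}

/-! The vertex `v` of `K₁` is at distance `1` from everything, and in `K₁ + H` two vertices of `H`
are at distance `0`, `1` or `2` according as they are equal, adjacent or neither. Since `H` is
bipartite it is triangle-free, so a vertex `a` of `H` separates the edge `bb'` exactly when it lies
in `N[b] ∪ N[b']`; `v` separates no such edge but separates itself from every vertex of `H`. Hence
`S ∪ {v}` is a local metric generator iff `S` vertex-edge dominates `H`, and `S ⊆ V(H)` is one iff
moreover no vertex of `H` is adjacent to all of `S`.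

If `x` is central (eccentricity `3`) and `A ⊆ N(x)` dominates the vertices at distance `2` from `x`,
then every edge has an endpoint at even distance, i.e. `0` or `2`, from `x`, so `A` vertex-edge
dominates `H`; this gives `dim_l ≤ δ' + 1`. Conversely, let `S ∪ {v}` be a local metric basis. By
minimality some vertex `b` is adjacent to all of `S`; then `b` has eccentricity at most `3`, hence
is central, and triangle-freeness makes `S` dominate the distance-`2` sphere around `b`, so
`δ' ≤ |S|`. -/

section VertexEdgeDomination

variable {β : Type*} (H : SimpleGraph β)

def IsVertexEdgeDominating (T : Set β) : Prop :=
  ∀ ⦃b b' : β⦄, H.Adj b b' → ∃ a ∈ T, (a = b ∨ H.Adj a b) ∨ (a = b' ∨ H.Adj a b')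

variable {H}

lemma exists_edist_eq_two_of_edist_eq_three {x y : β} (h : H.edist x y = 3) :
    ∃ w, H.edist x w = 2 := by
  obtain ⟨p, hp⟩ := exists_walk_of_edist_eq_coe (k := 3) h
  obtain ⟨-, hxy, hcommon⟩ := two_lt_edist_iff.mp (h ▸ (by decide : (2 : ℕ∞) < 3))
  have h01 := p.adj_getVert_succ (i := 0) (by omega)
  have h12 := p.adj_getVert_succ (i := 1) (by omega)
  have h23 := p.adj_getVert_succ (i := 2) (by omega)
  rw [Walk.getVert_zero] at h01
  rw [show 2 + 1 = p.length by omega, Walk.getVert_length] at h23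
  refine ⟨p.getVert 2, edist_eq_two_iff.mpr ⟨?_, ?_, p.getVert 1, h01, h12.symm⟩⟩
  · intro hx
    exact hxy (hx ▸ h23)
  · intro hx2
    exact Set.eq_empty_iff_forall_notMem.mp hcommon _ ⟨hx2, h23.symm⟩

lemma edist_eq_zero_or_two_of_eccent_le_three (c : H.Coloring Bool) {x w : β}
    (hx : H.eccent x ≤ 3) (hxw : c x = c w) : H.edist x w = 0 ∨ H.edist x w = 2 := by
  have hfin : H.edist x w ≠ ⊤ := ne_top_of_le_ne_top (by decide) (edist_le_eccent.trans hx)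
  obtain ⟨p, hp⟩ := exists_walk_of_edist_ne_top hfin
  obtain ⟨k, hk⟩ := (c.even_length_iff_congr p).mpr (by rw [hxw])
  have hle : p.length ≤ 3 := by exact_mod_cast hp ▸ edist_le_eccent.trans hx
  rw [← hp]
  rcases (by omega : p.length = 0 ∨ p.length = 2) with h | h <;> simp [h]

lemma isVertexEdgeDominating_of_dominates_sphere_two (c : H.Coloring Bool) {x : β} {A : Set β}
    (hx : H.eccent x ≤ 3) (hA : A.Nonempty) (hAx : ∀ a ∈ A, H.Adj x a)
    (hdom : ∀ w, H.edist x w = 2 → w ∉ A → ∃ a ∈ A, H.Adj a w) :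
    IsVertexEdgeDominating H A := by
  have hclosed : ∀ w, c x = c w → ∃ a ∈ A, a = w ∨ H.Adj a w := by
    intro w hxw
    rcases edist_eq_zero_or_two_of_eccent_le_three c hx hxw with h0 | h2
    · obtain ⟨a, ha⟩ := hA
      exact ⟨a, ha, .inr (edist_eq_zero_iff.mp h0 ▸ (hAx a ha).symm)⟩
    · by_cases hwA : w ∈ A
      · exact ⟨w, hwA, .inl rfl⟩
      · obtain ⟨a, ha, haw⟩ := hdom w h2 hwA
        exact ⟨a, ha, .inr haw⟩
  intro b b' hbb'
  have hcol : c x = c b ∨ c x = c b' := by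
    have := c.valid hbb'
    revert this; cases c x <;> cases c b <;> cases c b' <;> decide
  rcases hcol with h | h
  · obtain ⟨a, ha, hab⟩ := hclosed b h
    exact ⟨a, ha, .inl hab⟩
  · obtain ⟨a, ha, hab'⟩ := hclosed b' h
    exact ⟨a, ha, .inr hab'⟩

namespace IsVertexEdgeDominating

variable {T : Set β} {b : β}

lemma dominates_sphere_two (hH : H.CliqueFree 3) (hT : IsVertexEdgeDominating H T)
    (hbT : ∀ a ∈ T, H.Adj b a) (w : β) (hw : H.edist b w = 2) (hwT : w ∉ T) :
    ∃ a ∈ T, H.Adj a w := by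
  obtain ⟨-, -, z, hbz, hwz⟩ := edist_eq_two_iff.mp hw
  obtain ⟨a, ha, (rfl | haw) | (rfl | haz)⟩ := hT hwz
  · exact absurd ha hwT
  · exact ⟨a, ha, haw⟩
  · exact ⟨a, ha, hwz.symm⟩
  · exact (H.isIndepSet_neighborSet_of_triangleFree hH b (hbT a ha) hbz haz.ne haz).elim

lemma eccent_le_three (hT : IsVertexEdgeDominating H T) (hbT : ∀ a ∈ T, H.Adj b a)
    (hH : ∀ y, ∃ z, H.Adj y z) : H.eccent b ≤ 3 := by
  refine (eccent_le_iff _ _).mpr fun y => ?_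
  obtain ⟨z, hyz⟩ := hH y
  obtain ⟨a, ha, hay⟩ : ∃ a ∈ T, ∃ q : H.Walk a y, q.length ≤ 2 := by
    obtain ⟨a, ha, (rfl | hay) | (rfl | haz)⟩ := hT hyz
    exacts [⟨a, ha, .nil, by simp⟩, ⟨a, ha, hay.toWalk, by simp⟩,
      ⟨a, ha, hyz.symm.toWalk, by simp⟩, ⟨a, ha, .cons haz hyz.symm.toWalk, by simp⟩]
  obtain ⟨q, hq⟩ := hay
  calc H.edist b y ≤ (Walk.cons (hbT a ha) q).length := edist_le _
    _ ≤ 3 := by simp only [Walk.length_cons]; exact_mod_cast (by omega : q.length + 1 ≤ 3)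

end IsVertexEdgeDominating

end VertexEdgeDomination

section JoinK1

variable {β : Type*} {H : SimpleGraph β}

lemma joinK1_adj_none_some (b : β) : (joinK1 H).Adj none (some b) := by
  simp [joinK1]

lemma joinK1_adj_some_some {a b : β} : (joinK1 H).Adj (some a) (some b) ↔ H.Adj a b := by
  simp only [joinK1, fromRel_adj, ne_eq, Option.some.injEq]
  exact ⟨fun ⟨_, h⟩ => h.elim id Adj.symm, fun h => ⟨h.ne, .inl h⟩⟩

lemma joinK1_not_adj_none_none : ¬(joinK1 H).Adj none none := by
  simp [joinK1]

lemma joinK1_dist_none_some (b : β) : (joinK1 H).dist none (some b) = 1 :=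
  dist_eq_one_iff_adj.mpr (joinK1_adj_none_some b)

open Classical in
lemma joinK1_dist_some_some (a b : β) :
    (joinK1 H).dist (some a) (some b) = if a = b then 0 else if H.Adj a b then 1 else 2 := by
  split_ifs with hab hadj
  · rw [hab, dist_self]
  · exact dist_eq_one_iff_adj.mpr (joinK1_adj_some_some.mpr hadj)
  · let p : (joinK1 H).Walk (some a) (some b) :=
      .cons (joinK1_adj_none_some a).symm (joinK1_adj_none_some b).toWalk
    have hle : (joinK1 H).dist (some a) (some b) ≤ 2 := dist_le p
    have hlt := Reachable.one_lt_dist_of_ne_of_not_adj ⟨p⟩ (Option.some_injective _ |>.ne hab)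
      (joinK1_adj_some_some.not.mpr hadj)
    omega

lemma joinK1_dist_ne_none_some_iff {v : Option β} {b : β} :
    (joinK1 H).dist v none ≠ (joinK1 H).dist v (some b) ↔
      v = none ∨ ∃ a, v = some a ∧ ¬H.Adj a b := by
  cases v with
  | none => simp [joinK1_dist_none_some]
  | some a =>
    rw [dist_comm, joinK1_dist_none_some, joinK1_dist_some_some]
    have := H.irrefl (v := a)
    grind

lemma joinK1_dist_some_ne_some_iff (hH : H.CliqueFree 3) {b b' : β} (hbb' : H.Adj b b') (a : β) :
    (joinK1 H).dist (some a) (some b) ≠ (joinK1 H).dist (some a) (some b') ↔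
      (a = b ∨ H.Adj a b) ∨ (a = b' ∨ H.Adj a b') := by
  have htri : ¬(H.Adj a b ∧ H.Adj a b') := fun ⟨hab, hab'⟩ =>
    H.isIndepSet_neighborSet_of_triangleFree hH a hab hab' hbb'.ne hbb'
  rw [joinK1_dist_some_some, joinK1_dist_some_some]
  have := hbb'.ne
  grind

theorem isLocalMetricGenerator_joinK1_iff (hH : H.CliqueFree 3) {S : Set (Option β)} :
    IsLocalMetricGenerator (joinK1 H) S ↔
      IsVertexEdgeDominating H (some ⁻¹' S) ∧ ∀ b, none ∈ S ∨ ∃ a, some a ∈ S ∧ ¬H.Adj a b := by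
  have hvertex (b : β) : (∃ v ∈ S, (joinK1 H).dist v none ≠ (joinK1 H).dist v (some b)) ↔
      none ∈ S ∨ ∃ a, some a ∈ S ∧ ¬H.Adj a b := by
    simp only [joinK1_dist_ne_none_some_iff]
    aesop
  have hedge {b b' : β} (hbb' : H.Adj b b') :
      (∃ v ∈ S, (joinK1 H).dist v (some b) ≠ (joinK1 H).dist v (some b')) ↔
        ∃ a ∈ some ⁻¹' S, (a = b ∨ H.Adj a b) ∨ (a = b' ∨ H.Adj a b') := by
    simp only [Option.exists, joinK1_dist_none_some, ne_eq, not_true_eq_false, and_false,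
      false_or, joinK1_dist_some_ne_some_iff hH hbb', Set.mem_preimage]
  constructor
  · intro h
    exact ⟨fun b b' hbb' => (hedge hbb').mp (h _ _ (joinK1_adj_some_some.mpr hbb')),
      fun b => (hvertex b).mp (h _ _ (joinK1_adj_none_some b))⟩
  · rintro ⟨hT, hsep⟩ (_ | b) (_ | b') hadj
    · exact absurd hadj joinK1_not_adj_none_none
    · exact (hvertex b').mpr (hsep b')
    · obtain ⟨v, hv, hne⟩ := (hvertex b).mpr (hsep b)
      exact ⟨v, hv, hne.symm⟩
    · have hbb' := joinK1_adj_some_some.mp hadj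
      exact (hedge hbb').mpr (hT hbb')

end JoinK1

lemma localMetricDim_le_card {α : Type*} {G : SimpleGraph α} {S : Finset α}
    (hS : IsLocalMetricGenerator G ↑S) : localMetricDim G ≤ S.card :=
  Nat.sInf_le ⟨S, rfl, hS⟩

lemma gradius_eq_radius {α : Type*} (G : SimpleGraph α) : gradius G = G.radius := rfl

lemma nonempty_of_gradius_ne_top {α : Type*} {G : SimpleGraph α} (h : gradius G ≠ ⊤) :
    Nonempty α := by
  by_contra hα
  rw [not_nonempty_iff] at hα
  exact h radius_eq_top_of_isEmpty

section DeltaPrime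

variable {β : Type*} [Finite β] {H : SimpleGraph β}

variable (H) in
lemma deltaPrime_spec [Nonempty β] :
    ∃ x, ecc H x = gradius H ∧ ∃ A : Finset β, A.card = deltaPrime H ∧ (∀ a ∈ A, H.Adj x a) ∧
      ∀ w, H.edist x w = 2 → w ∉ A → ∃ a ∈ A, H.Adj a w := by
  obtain ⟨x, hx⟩ := H.exists_eccent_eq_radius
  have hne : {k | ∃ x : β, ecc H x = gradius H ∧ ∃ A : Finset β, A.card = k ∧
      (∀ a ∈ A, H.Adj x a) ∧ ∀ w : β, H.edist x w = 2 → w ∉ A → ∃ a ∈ A, H.Adj a w}.Nonempty := by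
    refine ⟨_, x, hx, (H.neighborSet x).toFinite.toFinset, rfl, fun a => by simp,
      fun w hw _ => ?_⟩
    obtain ⟨-, -, z, hxz, hwz⟩ := edist_eq_two_iff.mp hw
    exact ⟨z, by simpa using hxz, hwz.symm⟩
  exact Nat.sInf_mem hne

lemma exists_adj_of_gradius_eq_three (hr : gradius H = 3) (y : β) : ∃ z, H.Adj y z := by
  have : Nonempty β := ⟨y⟩
  have hconn : H.Connected := radius_ne_top_iff.mp (by rw [← gradius_eq_radius, hr]; decide)
  have : Nontrivial β := by
    by_contra h
    rw [not_nontrivial_iff_subsingleton] at h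
    exact absurd (radius_eq_zero_iff.mpr ⟨‹_›, h⟩) (by rw [← gradius_eq_radius, hr]; decide)
  exact hconn.preconnected.exists_adj_of_nontrivial y

lemma deltaPrime_le_card (hH : H.CliqueFree 3) (hr : gradius H = 3) {T : Finset β}
    (hT : IsVertexEdgeDominating H T) {b : β} (hbT : ∀ a ∈ T, H.Adj b a) :
    deltaPrime H ≤ T.card := by
  have hb : ecc H b = gradius H :=
    le_antisymm (hr ▸ hT.eccent_le_three hbT (exists_adj_of_gradius_eq_three hr)) radius_le_eccent
  exact Nat.sInf_le ⟨b, hb, T, rfl, hbT, hT.dominates_sphere_two hH hbT⟩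

lemma deltaPrime_add_one_le_card (hH : H.CliqueFree 3) (hr : gradius H = 3)
    {S : Finset (Option β)} (hS : IsLocalMetricBasis (joinK1 H) S) (hnone : none ∈ S) :
    deltaPrime H + 1 ≤ S.card := by
  classical
  have hcard : S.card = S.eraseNone.card + 1 := by
    have := Finset.card_pos.mpr ⟨none, hnone⟩
    rw [Finset.card_eraseNone_of_mem hnone]
    omega
  have hT : IsVertexEdgeDominating H ↑S.eraseNone := by
    rw [Finset.coe_eraseNone]
    exact ((isLocalMetricGenerator_joinK1_iff hH).mp hS.1).1
  -- by minimality, dropping the vertex of `K₁` leaves a non-generator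
  obtain ⟨b, hb⟩ : ∃ b, ∀ a ∈ S.eraseNone, H.Adj a b := by
    by_contra! h
    have hgen : IsLocalMetricGenerator (joinK1 H) ↑(S.eraseNone.map Function.Embedding.some) :=
      (isLocalMetricGenerator_joinK1_iff hH).mpr
        ⟨by rwa [← Finset.coe_eraseNone, Finset.eraseNone_map_some],
          fun b => .inr (by simpa using h b)⟩
    have := localMetricDim_le_card hgen
    rw [← hS.2, Finset.card_map] at this
    omega
  rw [hcard]
  exact Nat.succ_le_succ (deltaPrime_le_card hH hr hT fun a ha => (hb a ha).symm)

lemma exists_isLocalMetricGenerator_joinK1_card_eq (hbip : H.Colorable 2) (hr : gradius H = 3) :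
    ∃ S : Finset (Option β), IsLocalMetricGenerator (joinK1 H) ↑S ∧
      S.card = deltaPrime H + 1 ∧ none ∈ S := by
  have : Nonempty β := nonempty_of_gradius_ne_top (by rw [hr]; decide)
  obtain ⟨x, hx, A, hAcard, hAx, hAdom⟩ := deltaPrime_spec H
  have hx3 : H.eccent x = 3 := hx.trans hr
  have hAne : A.Nonempty := by
    obtain ⟨y, hy⟩ := H.exists_edist_eq_eccent_of_finite x
    obtain ⟨w, hw⟩ := exists_edist_eq_two_of_edist_eq_three (hy.trans hx3)
    by_cases hwA : w ∈ A
    exacts [⟨w, hwA⟩, (hAdom w hw hwA).imp fun a h => h.1]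
  have hA : IsVertexEdgeDominating H ↑A :=
    isVertexEdgeDominating_of_dominates_sphere_two (recolorOfEquiv H finTwoEquiv hbip.some)
      hx3.le hAne hAx hAdom
  refine ⟨Finset.insertNone A, ?_, by rw [Finset.card_insertNone, hAcard],
    Finset.none_mem_insertNone⟩
  refine (isLocalMetricGenerator_joinK1_iff (hbip.cliqueFree (by norm_num))).mpr
    ⟨?_, fun _ => .inl (by simp)⟩
  rwa [← Finset.coe_eraseNone, Finset.eraseNone_insertNone]

end DeltaPrime

theorem stmt19_general {β : Type*} [Fintype β] (H : SimpleGraph β)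
    (hbip : H.Colorable 2) (hr : gradius H = 3) :
    localMetricDim (joinK1 H) ≤ deltaPrime H + 1 ∧
    (localMetricDim (joinK1 H) = deltaPrime H + 1 ↔
      ∃ S : Finset (Option β), IsLocalMetricBasis (joinK1 H) S ∧ none ∈ S) := by
  obtain ⟨S₀, hgen, hcard, hnone₀⟩ := exists_isLocalMetricGenerator_joinK1_card_eq hbip hr
  have hle : localMetricDim (joinK1 H) ≤ deltaPrime H + 1 := hcard ▸ localMetricDim_le_card hgen
  refine ⟨hle, fun heq => ⟨S₀, ⟨hgen, hcard.trans heq.symm⟩, hnone₀⟩, ?_⟩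
  rintro ⟨S, hS, hnone⟩
  exact hle.antisymm (hS.2 ▸ deltaPrime_add_one_le_card (hbip.cliqueFree (by norm_num)) hr hS hnone)

/-- For a bipartite graph `H` of radius three,
`dim_l (K₁ + H) ≤ δ'(H) + 1`, with equality iff the vertex of `K₁` belongs to some local
metric basis of `K₁ + H`. -/
theorem stmt19 {β : Type*} [Fintype β] [Nonempty β] (H : SimpleGraph β)
    (hbip : H.Colorable 2) (hr : gradius H = 3) :
    localMetricDim (joinK1 H) ≤ deltaPrime H + 1 ∧
    (localMetricDim (joinK1 H) = deltaPrime H + 1 ↔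
      ∃ S : Finset (Option β), IsLocalMetricBasis (joinK1 H) S ∧ none ∈ S) :=
  stmt19_general H hbip hr
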